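/- arXiv:1712.07344 — 3 statements merged into one kernel-verified Lean document; each statement's English description precedes it below -/
import Mathlib

section
/- A Hausdorff locally convex space E over ℝ is Mackey-complete if and only if, for every Mackey-Cauchy sequence (x_n) in E, the closed absolutely convex hull of the set {x_n : n ∈ ℕ} is a complete subset of E. -/
/-!
A Mackey-Cauchy sequence is Cauchy, so completeness of the closed absolutely convex hull of its
range makes it converge. Conversely, let `x` be Mackey-Cauchy in a Mackey-complete space, with
limit `l`. Then `yₙ = xₙ - l` tends to `0` in the normed space spanned by some closed bounded
absolutely convex set `B`. On the closed unit ball of `ℓ¹`, compact for the product topology, the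
series `t ↦ ∑ tₙ • yₙ` converges by Mackey-completeness, uniformly in `t` because the `yₙ` become
small in `B`; so it is continuous, and its image is a compact absolutely convex set containing
every `yₙ`. Hence the closed absolutely convex hull of the `yₙ` is compact, and so is that of the
`xₙ`, which lies in the sum of this hull with the segment `[-l, l]`.
-/

open Filter Topology Set Bornology Pointwise

/-- A sequence in a locally convex space is *Mackey-Cauchy* if there are a bounded
absolutely convex set `B` and a double sequence of nonnegative reals `c` tending to `0`
such that `x n - x m ∈ c n m • B` for all `n, m`. -/
def MackeyCauchy (E : Type*) [AddCommGroup E] [Module ℝ E] [TopologicalSpace E]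
    (x : ℕ → E) : Prop :=
  ∃ (B : Set E) (c : ℕ → ℕ → ℝ),
    IsVonNBounded ℝ B ∧ Convex ℝ B ∧ Balanced ℝ B ∧
    (∀ n m, 0 ≤ c n m) ∧
    Tendsto (fun p : ℕ × ℕ => c p.1 p.2) atTop (𝓝 (0 : ℝ)) ∧
    ∀ n m, x n - x m ∈ c n m • B

/-- A locally convex space is *Mackey-complete* if every Mackey-Cauchy sequence converges. -/
def MackeyComplete (E : Type*) [AddCommGroup E] [Module ℝ E] [TopologicalSpace E] : Prop :=
  ∀ x : ℕ → E, MackeyCauchy E x → ∃ l : E, Tendsto x atTop (𝓝 l)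

/-- A locally convex space is *k-quasi-complete* if the closed absolutely convex hull of
every compact set is compact. -/
def KQuasiComplete (E : Type*) [AddCommGroup E] [Module ℝ E] [TopologicalSpace E] : Prop :=
  ∀ K : Set E, IsCompact K → IsCompact (closure (convexHull ℝ (balancedHull ℝ K)))

def l1ClosedBall : Set (ℕ → ℝ) := {t | ∀ F : Finset ℕ, ∑ i ∈ F, |t i| ≤ 1}

theorem isCompact_l1ClosedBall : IsCompact l1ClosedBall := by
  have hclosed : IsClosed l1ClosedBall := by
    simp only [l1ClosedBall, ofPred_forall]
    exact isClosed_iInter fun F =>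
      isClosed_le (continuous_finsetSum F fun i _ => (continuous_apply i).abs) continuous_const
  refine (isCompact_univ_pi fun _ => isCompact_Icc (a := (-1 : ℝ)) (b := 1)).of_isClosed_subset
    hclosed fun t ht n _ => abs_le.1 (by simpa using ht {n})

theorem convex_l1ClosedBall : Convex ℝ l1ClosedBall := by
  intro t ht t' ht' a b ha hb hab F
  calc ∑ i ∈ F, |(a • t + b • t') i| ≤ ∑ i ∈ F, (a * |t i| + b * |t' i|) :=
        Finset.sum_le_sum fun i _ => by
          simpa [abs_mul, abs_of_nonneg ha, abs_of_nonneg hb] using abs_add_le (a * t i) (b * t' i)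
    _ = a * ∑ i ∈ F, |t i| + b * ∑ i ∈ F, |t' i| := by
        rw [Finset.sum_add_distrib, Finset.mul_sum, Finset.mul_sum]
    _ ≤ a * 1 + b * 1 := by gcongr; exacts [ht F, ht' F]
    _ = 1 := by rw [mul_one, mul_one, hab]

theorem balanced_l1ClosedBall : Balanced ℝ l1ClosedBall := by
  rintro a ha _ ⟨t, ht, rfl⟩ F
  calc ∑ i ∈ F, |(a • t) i| = |a| * ∑ i ∈ F, |t i| := by simp [abs_mul, Finset.mul_sum]
    _ ≤ 1 * 1 := by
        gcongr
        exacts [ha, ht F]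
    _ = 1 := one_mul 1

theorem single_mem_l1ClosedBall (n : ℕ) : Pi.single n 1 ∈ l1ClosedBall := by
  intro F
  simp [Pi.single_apply, apply_ite (|·|), Finset.sum_ite_eq']
  split_ifs <;> norm_num

theorem sum_Ico_abs_le_tsum_abs {t : ℕ → ℝ} (ht : t ∈ l1ClosedBall) (m n : ℕ) :
    ∑ k ∈ Finset.Ico m n, |t k| ≤ ∑' k, |t (k + m)| := by
  have hsum : Summable fun k => |t k| :=
    summable_of_sum_range_le (fun _ => abs_nonneg _) fun n => ht (Finset.range n)
  rw [Finset.sum_Ico_eq_sum_range]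
  simp_rw [add_comm m]
  exact ((summable_nat_add_iff m).2 hsum).sum_le_tsum _ fun _ _ => abs_nonneg _

section

variable {E : Type*} [AddCommGroup E] [Module ℝ E]

theorem AbsConvex.sum_smul_mem_smul {B : Set E} (hB : AbsConvex ℝ B) (h0 : (0 : E) ∈ B)
    {ι : Type*} {F : Finset ι} {a : ι → ℝ} {b : ι → E} (hb : ∀ i ∈ F, b i ∈ B) {c : ℝ}
    (hc : ∑ i ∈ F, |a i| ≤ c) : ∑ i ∈ F, a i • b i ∈ c • B := by
  classical
  have hsum : ∑ i ∈ F, a i • b i ∈ (∑ i ∈ F, |a i|) • B := by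
    clear hc
    induction F using Finset.induction_on with
    | empty => simp [zero_smul_set ⟨0, h0⟩]
    | insert i F hi ih =>
      rw [Finset.sum_insert hi, Finset.sum_insert hi,
        hB.2.add_smul (abs_nonneg _) (Finset.sum_nonneg fun _ _ => abs_nonneg _)]
      exact add_mem_add (hB.1.smul_mono (by simp) (smul_mem_smul_set (hb i (by simp))))
        (ih (fun j hj => hb j (by simp [hj])))
  have hnonneg : 0 ≤ ∑ i ∈ F, |a i| := Finset.sum_nonneg fun _ _ => abs_nonneg _
  refine hB.1.smul_mono ?_ hsum
  rw [Real.norm_of_nonneg hnonneg]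
  exact hc.trans (le_abs_self c)

theorem tendstoUniformlyOn_of_eventually_sub_mem_smul {α ι : Type*} [UniformSpace E]
    [IsUniformAddGroup E] {B : Set E} (hB : IsVonNBounded ℝ B)
    {F : ι → α → E} {f : α → E} {p : Filter ι} {s : Set α}
    (h : ∀ ε > (0 : ℝ), ∀ᶠ i in p, ∀ a ∈ s, F i a - f a ∈ ε • B) :
    TendstoUniformlyOn F f p s := by
  intro u hu
  rw [uniformity_eq_comap_nhds_zero E] at hu
  obtain ⟨V, hV, hVu⟩ := mem_comap.1 hu
  obtain ⟨ε, hεV, hε⟩ := (((tendsto_smallSets_iff.1 hB.tendsto_smallSets_nhds V hV).filter_mono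
    (nhdsWithin_le_nhds (s := Ioi 0))).and self_mem_nhdsWithin).exists
  filter_upwards [h ε hε] with i hi a ha using hVu (hεV (hi a ha))

theorem MackeyCauchy.cauchySeq [UniformSpace E] [IsUniformAddGroup E] {x : ℕ → E}
    (hx : MackeyCauchy E x) : CauchySeq x := by
  obtain ⟨B, c, hB, -, -, -, hc, hxc⟩ := hx
  have hswap : Tendsto (Prod.swap : ℕ × ℕ → ℕ × ℕ) atTop atTop :=
    tendsto_atTop_atTop.2 fun b => ⟨b.swap, fun p hp => ⟨hp.2, hp.1⟩⟩
  have hc' : Tendsto (fun p : ℕ × ℕ => c p.2 p.1) atTop (𝓝 0) := hc.comp hswap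
  rw [cauchySeq_iff_tendsto, uniformity_eq_comap_nhds_zero E, tendsto_comap_iff]
  exact (hB.tendsto_smallSets_nhds.comp hc').of_smallSets (.of_forall fun p => hxc p.2 p.1)

variable [TopologicalSpace E]

theorem Bornology.IsVonNBounded.closedAbsConvexHull [IsTopologicalAddGroup E]
    [ContinuousSMul ℝ E] [LocallyConvexSpace ℝ E] {s : Set E} (hs : IsVonNBounded ℝ s) :
    IsVonNBounded ℝ (closedAbsConvexHull ℝ s) := by
  intro V hV
  obtain ⟨W, ⟨hW, hWc, hWac⟩, hWV⟩ := (nhds_hasBasis_absConvex_closed ℝ E).mem_iff.1 hV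
  refine Absorbs.mono_left ?_ hWV
  filter_upwards [hs hW, eventually_ne_cobounded 0] with a ha ha0
  exact closedAbsConvexHull_min ha ⟨hWac.1.smul a, hWac.2.smul a⟩ (hWc.smul_of_ne_zero ha0)

theorem mackeyCauchy_of_sub_mem_smul {B : Set E} {x : ℕ → E} {τ : ℕ → ℝ}
    (hB : IsVonNBounded ℝ B) (hBac : AbsConvex ℝ B) (hτ0 : ∀ n, 0 ≤ τ n)
    (hτ : Tendsto τ atTop (𝓝 0)) (hx : ∀ m n, m ≤ n → x n - x m ∈ τ m • B) :
    MackeyCauchy E x := by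
  refine ⟨B, fun n m => τ (min n m), hB, hBac.2, hBac.1, fun _ _ => hτ0 _,
    hτ.comp (tendsto_atTop_atTop.2 fun b => ⟨(b, b), fun p hp => le_min hp.1 hp.2⟩),
    fun n m => ?_⟩
  rcases le_total m n with h | h
  · simpa [min_eq_right h] using hx m n h
  · show x n - x m ∈ τ (min n m) • B
    rw [min_eq_left h, ← neg_sub]
    exact ((hBac.1.smul _).neg_mem_iff).2 (hx n m h)

theorem MackeyCauchy.exists_eventually_sub_mem_smul [IsTopologicalAddGroup E]
    [ContinuousSMul ℝ E] [LocallyConvexSpace ℝ E] {x : ℕ → E} {l : E} (hx : MackeyCauchy E x)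
    (hl : Tendsto x atTop (𝓝 l)) :
    ∃ B : Set E, IsVonNBounded ℝ B ∧ IsClosed B ∧ AbsConvex ℝ B ∧ (∀ n, x n - l ∈ B) ∧
      ∀ ε > (0 : ℝ), ∀ᶠ n in atTop, x n - l ∈ ε • B := by
  obtain ⟨B, c, hB, -, hBbal, hc0, hc, hxc⟩ := hx
  set B₂ := closedAbsConvexHull ℝ (B ∪ range fun n => x n - l)
  have hBB₂ : B ⊆ B₂ := subset_union_left.trans subset_closedAbsConvexHull
  refine ⟨B₂, (hB.union ((hl.sub_const l).isVonNBounded_range ℝ)).closedAbsConvexHull,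
    isClosed_closedAbsConvexHull, absConvex_convexClosedHull,
    fun n => subset_closedAbsConvexHull (Or.inr ⟨n, rfl⟩), fun ε hε => ?_⟩
  obtain ⟨N, hN⟩ := eventually_atTop_prod_self'.1 (hc.eventually_lt_const hε)
  filter_upwards [eventually_ge_atTop N] with n hn
  refine (isClosed_closedAbsConvexHull.smul_of_ne_zero hε.ne').mem_of_tendsto
    (tendsto_const_nhds.sub hl) ?_
  filter_upwards [eventually_ge_atTop N] with m hm
  refine smul_set_mono hBB₂ (hBbal.smul_mono ?_ (hxc n m))
  rw [Real.norm_of_nonneg (hc0 n m), Real.norm_of_nonneg hε.le]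
  exact (hN n hn m hm).le

/-- The limit of the partial sums of `∑ tₙ • yₙ`; a junk value when they do not converge. -/
noncomputable def weightedSeries (y : ℕ → E) (t : ℕ → ℝ) : E :=
  limUnder atTop fun m => ∑ n ∈ Finset.range m, t n • y n

variable {B : Set E} {y : ℕ → E} {t t' : ℕ → ℝ}

theorem mackeyCauchy_sum_range_smul (hB : IsVonNBounded ℝ B) (hBac : AbsConvex ℝ B)
    (hyB : ∀ n, y n ∈ B) (ht : t ∈ l1ClosedBall) :
    MackeyCauchy E fun m => ∑ n ∈ Finset.range m, t n • y n :=
  mackeyCauchy_of_sub_mem_smul hB hBac (fun _ => tsum_nonneg fun _ => abs_nonneg _)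
    (tendsto_sum_nat_add fun n => |t n|) fun m n hmn => by
      rw [← Finset.sum_Ico_eq_sub _ hmn]
      exact hBac.sum_smul_mem_smul (hBac.1.zero_mem ⟨_, hyB 0⟩) (fun k _ => hyB k)
        (sum_Ico_abs_le_tsum_abs ht m n)

theorem tendsto_weightedSeries (hMC : MackeyComplete E) (hB : IsVonNBounded ℝ B)
    (hBac : AbsConvex ℝ B) (hyB : ∀ n, y n ∈ B) (ht : t ∈ l1ClosedBall) :
    Tendsto (fun m => ∑ n ∈ Finset.range m, t n • y n) atTop (𝓝 (weightedSeries y t)) :=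
  tendsto_nhds_limUnder (hMC _ (mackeyCauchy_sum_range_smul hB hBac hyB ht))

theorem weightedSeries_single [T2Space E] (y : ℕ → E) (n : ℕ) :
    weightedSeries y (Pi.single n 1) = y n := by
  refine Tendsto.limUnder_eq (tendsto_atTop_of_eventually_const (i₀ := n + 1) fun m hm => ?_)
  simp [Pi.single_apply, ite_smul, Finset.sum_ite_eq']
  omega

variable [IsTopologicalAddGroup E] [ContinuousSMul ℝ E]

theorem weightedSeries_smul_add_smul [T2Space E] (hMC : MackeyComplete E) (hB : IsVonNBounded ℝ B)
    (hBac : AbsConvex ℝ B) (hyB : ∀ n, y n ∈ B) (ht : t ∈ l1ClosedBall)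
    (ht' : t' ∈ l1ClosedBall) {a b : ℝ} (hab : a • t + b • t' ∈ l1ClosedBall) :
    weightedSeries y (a • t + b • t') = a • weightedSeries y t + b • weightedSeries y t' := by
  refine tendsto_nhds_unique (tendsto_weightedSeries hMC hB hBac hyB hab) ?_
  simpa [add_smul, mul_smul, Finset.smul_sum, Finset.sum_add_distrib] using
    ((tendsto_weightedSeries hMC hB hBac hyB ht).const_smul a).add
      ((tendsto_weightedSeries hMC hB hBac hyB ht').const_smul b)

theorem absConvex_image_weightedSeries [T2Space E] (hMC : MackeyComplete E) (hB : IsVonNBounded ℝ B)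
    (hBac : AbsConvex ℝ B) (hyB : ∀ n, y n ∈ B) :
    AbsConvex ℝ (weightedSeries y '' l1ClosedBall) := by
  refine ⟨?_, ?_⟩
  · rintro a ha _ ⟨_, ⟨t, ht, rfl⟩, rfl⟩
    have hat : a • t ∈ l1ClosedBall := balanced_l1ClosedBall a ha (smul_mem_smul_set ht)
    refine ⟨a • t, hat, ?_⟩
    simpa using weightedSeries_smul_add_smul hMC hB hBac hyB ht ht (b := 0) (by simpa using hat)
  · rintro _ ⟨t, ht, rfl⟩ _ ⟨t', ht', rfl⟩ a b ha hb hab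
    have hcomb := convex_l1ClosedBall ht ht' ha hb hab
    exact ⟨_, hcomb, weightedSeries_smul_add_smul hMC hB hBac hyB ht ht' hcomb⟩

theorem sum_range_sub_weightedSeries_mem_smul (hMC : MackeyComplete E)
    (hB : IsVonNBounded ℝ B) (hBc : IsClosed B) (hBac : AbsConvex ℝ B) (hyB : ∀ n, y n ∈ B)
    {ε : ℝ} (hε : ε ≠ 0) {N : ℕ} (hN : ∀ k ≥ N, y k ∈ ε • B) (ht : t ∈ l1ClosedBall) :
    ∑ n ∈ Finset.range N, t n • y n - weightedSeries y t ∈ ε • B := by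
  refine (hBc.smul_of_ne_zero hε).mem_of_tendsto
    (tendsto_const_nhds.sub (tendsto_weightedSeries hMC hB hBac hyB ht)) ?_
  filter_upwards [eventually_ge_atTop N] with m hm
  rw [← neg_sub, ← Finset.sum_Ico_eq_sub _ hm, (hBac.1.smul ε).neg_mem_iff, ← one_smul ℝ (ε • B)]
  exact AbsConvex.sum_smul_mem_smul ⟨hBac.1.smul ε, hBac.2.smul ε⟩
    (by simpa using smul_mem_smul_set (a := ε) (hBac.1.zero_mem ⟨_, hyB 0⟩))
    (fun k hk => hN k (Finset.mem_Ico.1 hk).1) (ht _)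

end

section

variable {E : Type*} [AddCommGroup E] [Module ℝ E] [UniformSpace E] [IsUniformAddGroup E]
  [ContinuousSMul ℝ E] {B : Set E} {y : ℕ → E}

theorem continuousOn_weightedSeries (hMC : MackeyComplete E) (hB : IsVonNBounded ℝ B)
    (hBc : IsClosed B) (hBac : AbsConvex ℝ B) (hyB : ∀ n, y n ∈ B)
    (hy : ∀ ε > (0 : ℝ), ∀ᶠ n in atTop, y n ∈ ε • B) :
    ContinuousOn (weightedSeries y) l1ClosedBall := by
  refine TendstoUniformlyOn.continuousOn (F := fun N t => ∑ n ∈ Finset.range N, t n • y n)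
    (p := atTop) (tendstoUniformlyOn_of_eventually_sub_mem_smul hB fun ε hε => ?_)
    (.of_forall fun N => ?_)
  · obtain ⟨N₀, hN₀⟩ := eventually_atTop.1 (hy ε hε)
    filter_upwards [eventually_ge_atTop N₀] with N hN t ht
    exact sum_range_sub_weightedSeries_mem_smul hMC hB hBc hBac hyB hε.ne'
      (fun k hk => hN₀ k (hN.trans hk)) ht
  · exact (continuous_finsetSum _ fun n _ =>
      (continuous_apply n).smul continuous_const).continuousOn

theorem MackeyComplete.isCompact_closedAbsConvexHull_range [T2Space E]
    (hMC : MackeyComplete E) (hB : IsVonNBounded ℝ B) (hBc : IsClosed B) (hBac : AbsConvex ℝ B)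
    (hyB : ∀ n, y n ∈ B) (hy : ∀ ε > (0 : ℝ), ∀ᶠ n in atTop, y n ∈ ε • B) :
    IsCompact (closedAbsConvexHull ℝ (range y)) := by
  have hK : IsCompact (weightedSeries y '' l1ClosedBall) :=
    isCompact_l1ClosedBall.image_of_continuousOn
      (continuousOn_weightedSeries hMC hB hBc hBac hyB hy)
  refine hK.of_isClosed_subset isClosed_closedAbsConvexHull
    (closedAbsConvexHull_min ?_ (absConvex_image_weightedSeries hMC hB hBac hyB) hK.isClosed)
  rintro _ ⟨n, rfl⟩
  exact ⟨_, single_mem_l1ClosedBall n, weightedSeries_single y n⟩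

theorem MackeyCauchy.isCompact_closedAbsConvexHull_range [LocallyConvexSpace ℝ E] [T2Space E]
    (hMC : MackeyComplete E) {x : ℕ → E} (hx : MackeyCauchy E x) :
    IsCompact (closedAbsConvexHull ℝ (range x)) := by
  obtain ⟨l, hl⟩ := hMC x hx
  obtain ⟨B, hB, hBc, hBac, hyB, hy⟩ := hx.exists_eventually_sub_mem_smul hl
  have hK : IsCompact (absConvexHull ℝ {l} + closedAbsConvexHull ℝ (range fun n => x n - l)) := by
    refine IsCompact.add ?_ (hMC.isCompact_closedAbsConvexHull_range hB hBc hBac hyB hy)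
    rw [← convexHull_union_neg_eq_absConvexHull]
    exact Set.Finite.isCompact_convexHull (𝕜 := ℝ)
      ((finite_singleton l).union (finite_singleton l).neg)
  refine hK.of_isClosed_subset isClosed_closedAbsConvexHull (closedAbsConvexHull_min ?_
    ⟨balanced_absConvexHull.add absConvex_convexClosedHull.1,
      convex_absConvexHull.add absConvex_convexClosedHull.2⟩ hK.isClosed)
  rintro _ ⟨n, rfl⟩
  exact ⟨l, subset_absConvexHull rfl, x n - l, subset_closedAbsConvexHull ⟨n, rfl⟩,
    add_sub_cancel l (x n)⟩

end

/-- A Hausdorff locally convex space `E` over `ℝ` is Mackey-complete iff for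
every Mackey-Cauchy sequence the closed absolutely convex hull of its range is complete. -/
theorem mackeyComplete_iff_isComplete_closedAbsConvexHull
    (E : Type*) [AddCommGroup E] [Module ℝ E] [UniformSpace E] [IsUniformAddGroup E]
    [ContinuousSMul ℝ E] [LocallyConvexSpace ℝ E] [T2Space E] :
    MackeyComplete E ↔
      ∀ x : ℕ → E, MackeyCauchy E x →
        IsComplete (closure (convexHull ℝ (balancedHull ℝ (Set.range x)))) := by
  simp_rw [← absConvexHull_eq_convexHull_balancedHull ℝ,
    ← closedAbsConvexHull_eq_closure_absConvexHull (𝕜 := ℝ)]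
  refine ⟨fun hMC x hx => (hx.isCompact_closedAbsConvexHull_range hMC).isComplete, fun h x hx => ?_⟩
  obtain ⟨l, -, hl⟩ := cauchySeq_tendsto_of_isComplete (h x hx)
    (fun n => subset_closedAbsConvexHull ⟨n, rfl⟩) hx.cauchySeq
  exact ⟨l, hl⟩
end

section
/- Let K be a compact topological space and let F be a Mackey-complete Hausdorff locally convex space over ℝ. Then the space C(K, F) of continuous maps from K to F, equipped with the topology of uniform convergence (the compact-open topology), is Mackey-complete. -/
open Filter Topology Set Bornology Pointwise

/-! The evaluation maps `C(K, F) → F` are continuous and linear, so they send Mackey-Cauchy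
sequences to Mackey-Cauchy sequences; hence a Mackey-Cauchy sequence in `C(K, F)` has a
pointwise limit `f`. Being Mackey-Cauchy, it is also Cauchy for the uniformity of `C(K, F)`,
which for compact `K` is uniform convergence; a uniformly Cauchy sequence converges uniformly
to its pointwise limit, so `f` is continuous and is the limit in `C(K, F)`. -/

theorem Balanced.image_linearMap {𝕜 E G : Type*} [SeminormedRing 𝕜] [AddCommGroup E]
    [Module 𝕜 E] [AddCommGroup G] [Module 𝕜 G] {s : Set E} (hs : Balanced 𝕜 s)
    (f : E →ₗ[𝕜] G) : Balanced 𝕜 (f '' s) := fun a ha => by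
  rw [← image_smul_set]
  exact image_mono (hs a ha)

section MackeyCauchy

variable {E : Type*} [AddCommGroup E] [Module ℝ E] [TopologicalSpace E] {x : ℕ → E}

theorem MackeyCauchy.map {G : Type*} [AddCommGroup G] [Module ℝ G] [TopologicalSpace G]
    (hx : MackeyCauchy E x) (L : E →L[ℝ] G) : MackeyCauchy G (fun n => L (x n)) := by
  obtain ⟨B, c, hBbdd, hBconv, hBbal, hc_nonneg, hc_lim, hmem⟩ := hx
  refine ⟨L '' B, c, hBbdd.image L, hBconv.linear_image L.toLinearMap,
    hBbal.image_linearMap L.toLinearMap, hc_nonneg, hc_lim, fun n m => ?_⟩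
  rw [← map_sub, ← image_smul_set]
  exact mem_image_of_mem L (hmem n m)

theorem MackeyCauchy.tendsto_sub (hx : MackeyCauchy E x) :
    Tendsto (fun p : ℕ × ℕ => x p.1 - x p.2) atTop (𝓝 0) := by
  obtain ⟨B, c, hBbdd, -, -, -, hc_lim, hmem⟩ := hx
  choose b hbB hb using fun n m => mem_smul_set.1 (hmem n m)
  have hsmall := hBbdd.smul_tendsto_zero (x := fun p : ℕ × ℕ => b p.1 p.2)
    (Eventually.of_forall fun p => hbB p.1 p.2) hc_lim
  exact hsmall.congr fun p => hb p.1 p.2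

end MackeyCauchy

theorem ContinuousMap.exists_tendsto_of_tendsto_sub_of_tendsto_apply {ι K F : Type*}
    [TopologicalSpace K] [CompactSpace K] [AddCommGroup F] [TopologicalSpace F]
    [IsTopologicalAddGroup F] {l : Filter ι} [l.NeBot] {x : ι → C(K, F)}
    (hx : Tendsto (fun p : ι × ι => x p.1 - x p.2) (l ×ˢ l) (𝓝 0)) {f : K → F}
    (hf : ∀ k, Tendsto (fun i => x i k) l (𝓝 (f k))) :
    ∃ g : C(K, F), Tendsto x l (𝓝 g) := by
  let _ : UniformSpace F := IsTopologicalAddGroup.rightUniformSpace F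
  have : IsUniformAddGroup F := isUniformAddGroup_of_addCommGroup
  have hsub : TendstoUniformly (fun p : ι × ι => ⇑(x p.2 - x p.1)) 0 (l ×ˢ l) :=
    ContinuousMap.tendsto_iff_tendstoUniformly.1 (hx.comp tendsto_prod_swap)
  have hcauchy : UniformCauchySeqOn (fun i k => x i k) l univ := by
    rw [IsTopologicalAddGroup.uniformCauchySeqOn_iff _ _ _ rfl]
    intro u hu
    filter_upwards [(IsTopologicalAddGroup.tendstoUniformly_iff _ _ _ rfl).1 hsub u hu]
      with p hp k _ using by simpa using hp k
  have hunif : TendstoUniformly (fun i k => x i k) f l :=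
    tendstoUniformlyOn_univ.1 (hcauchy.tendstoUniformlyOn_of_tendsto fun k _ => hf k)
  refine ⟨⟨f, hunif.continuous (Frequently.of_forall fun i => (x i).continuous)⟩, ?_⟩
  exact ContinuousMap.tendsto_iff_tendstoUniformly.2 hunif

theorem mackeyComplete_continuousMap_general
    (K : Type*) [TopologicalSpace K] [CompactSpace K]
    (F : Type*) [AddCommGroup F] [Module ℝ F] [TopologicalSpace F] [IsTopologicalAddGroup F]
    [ContinuousSMul ℝ F]
    (hF : MackeyComplete F) :
    MackeyComplete C(K, F) := by
  intro x hx
  have hpointwise (k : K) : ∃ l, Tendsto (fun n => x n k) atTop (𝓝 l) :=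
    hF _ (hx.map (ContinuousMap.evalCLM ℝ k))
  choose f hf using hpointwise
  exact ContinuousMap.exists_tendsto_of_tendsto_sub_of_tendsto_apply
    (hx.tendsto_sub.mono_left prod_atTop_atTop_eq.le) hf

/-- For a compact topological space `K` and a Mackey-complete Hausdorff
locally convex space `F` over `ℝ`, the space `C(K, F)` of continuous maps with the topology of
uniform convergence (the compact-open topology) is Mackey-complete. -/
theorem mackeyComplete_continuousMap
    (K : Type*) [TopologicalSpace K] [CompactSpace K]
    (F : Type*) [AddCommGroup F] [Module ℝ F] [TopologicalSpace F] [IsTopologicalAddGroup F]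
    [ContinuousSMul ℝ F] [LocallyConvexSpace ℝ F] [T2Space F]
    (hF : MackeyComplete F) :
    MackeyComplete C(K, F) :=
  mackeyComplete_continuousMap_general K F hF
end

section
/- A Hausdorff locally convex space E over ℝ is k-reflexive (i.e., E is k-quasi-complete and the canonical evaluation map E → (E'_k)'_k is a topological isomorphism) if and only if the canonical evaluation map E → (E'_c)'_c is a topological isomorphism and both E and its Arens dual E'_c are k-quasi-complete. -/
open Filter Topology Set Bornology Pointwise

variable (E : Type*) [AddCommGroup E] [Module ℝ E] [TopologicalSpace E]

/-- The Arens dual `E'_c`: the topological dual with the topology of uniform convergence on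
absolutely convex compact subsets of `E`. -/
abbrev ArensDual : Type _ :=
  UniformConvergenceCLM (RingHom.id ℝ) ℝ {K : Set E | Convex ℝ K ∧ Balanced ℝ K ∧ IsCompact K}

/-- The Mackey dual `E'_μ`: the topological dual with the topology of uniform convergence on
absolutely convex weakly compact subsets of `E`. -/
abbrev MackeyDual : Type _ :=
  UniformConvergenceCLM (RingHom.id ℝ) ℝ
    {K : Set E | Convex ℝ K ∧ Balanced ℝ K ∧ IsCompact (⇑(toWeakSpace ℝ E) '' K)}

/-- The Schwartz ε-product `E ε F`: continuous linear maps from the Arens dual `E'_c` to `F`,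
with the topology of uniform convergence on equicontinuous subsets of `E'`. -/
abbrev EpsProduct (F : Type*) [AddCommGroup F] [Module ℝ F] [TopologicalSpace F]
    [IsTopologicalAddGroup F] : Type _ :=
  UniformConvergenceCLM (RingHom.id ℝ) F
    {H : Set (ArensDual E) | Equicontinuous fun f : H => (f.1 : E → ℝ)}

/-- The η-product `E η F`: continuous linear maps from the Mackey dual `E'_μ` to `F`,
with the topology of uniform convergence on equicontinuous subsets of `E'`. -/
abbrev EtaProduct (F : Type*) [AddCommGroup F] [Module ℝ F] [TopologicalSpace F]
    [IsTopologicalAddGroup F] : Type _ :=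
  UniformConvergenceCLM (RingHom.id ℝ) F
    {H : Set (MackeyDual E) | Equicontinuous fun f : H => (f.1 : E → ℝ)}

noncomputable section

instance Submodule.instUniformAddGroup
    {R X : Type*} [Ring R] [AddCommGroup X] [Module R X] [UniformSpace X] [IsUniformAddGroup X]
    (M : Submodule R X) : IsUniformAddGroup M :=
  IsUniformAddGroup.comap M.subtype

instance Submodule.instUniformContinuousConstSMul
    {X : Type*} [AddCommGroup X] [Module ℝ X] [UniformSpace X]
    [UniformContinuousConstSMul ℝ X]
    (M : Submodule ℝ X) : UniformContinuousConstSMul ℝ M :=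
  ⟨fun c => ((uniformContinuous_const_smul c).comp uniformContinuous_subtype_val).subtype_mk _⟩

variable (X : Type*) [AddCommGroup X] [Module ℝ X] [UniformSpace X] [IsUniformAddGroup X]
  [UniformContinuousConstSMul ℝ X]

/-- The k-quasi-completion `X̂^K` of `X`: the intersection of all k-quasi-complete subspaces
of the completion of `X` containing `X`, with the induced topology. -/
abbrev kQuasiCompletion : Submodule ℝ (UniformSpace.Completion X) :=
  sInf {G : Submodule ℝ (UniformSpace.Completion X) |
    Set.range ((↑) : X → UniformSpace.Completion X) ⊆ (G : Set (UniformSpace.Completion X)) ∧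
    KQuasiComplete G}

/-- The canonical map of `X` into its k-quasi-completion. -/
def toKQuasiCompletion (x : X) : kQuasiCompletion X :=
  ⟨(x : UniformSpace.Completion X), Submodule.mem_sInf.2 fun _ hG => hG.1 ⟨x, rfl⟩⟩

/-- `X'_k`, the Arens dual of the k-quasi-completion of `X`. -/
abbrev kDual : Type _ := ArensDual ↥(kQuasiCompletion X)

/-!
If `E` is k-quasi-complete it is its own k-quasi-completion, so `E'_k ≅ E'_c`; if moreover
`E'_c` is k-quasi-complete, the same applies one level up and `(E'_k)'_k ≅ (E'_c)'_c`, compatibly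
with the two evaluation maps. What remains is that k-reflexivity forces `E'_c` to be
k-quasi-complete. Through the evaluation isomorphism `e : E ≅ (E'_k)'_k`, a point `y` of the
k-quasi-completion of `E'_k` gives the functional `x ↦ (e x) y`, continuous on `E`, hence a point
`f` of `E'_c ≅ E'_k`. Every continuous functional on the k-quasi-completion of `E'_k` is some `e x`,
and `e x` takes the same value at `y` and at `f`, so `y = f` by Hahn–Banach.

The k-quasi-completion is k-quasi-complete because the completion is (closures of totally bounded
sets are compact there) and because a k-quasi-complete subspace contains the closed absolutely
convex hull of each of its compact subsets.
-/

open UniformSpace Function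

section LinearImage

variable {𝕜 A B F : Type*} [SeminormedRing 𝕜] [AddCommMonoid A] [Module 𝕜 A]
  [AddCommMonoid B] [Module 𝕜 B] [FunLike F A B] [LinearMapClass F 𝕜 A B]

theorem Balanced.image {s : Set A} (hs : Balanced 𝕜 s) (f : F) : Balanced 𝕜 (f '' s) :=
  fun a ha => by rw [← image_smul_set]; exact image_mono (hs a ha)

theorem image_balancedHull (f : F) (s : Set A) :
    f '' balancedHull 𝕜 s = balancedHull 𝕜 (f '' s) := by
  simp only [balancedHull, image_iUnion, image_smul_set]

end LinearImage

theorem LinearMap.image_convexHull_balancedHull {A B : Type*} [AddCommGroup A] [Module ℝ A]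
    [AddCommGroup B] [Module ℝ B] (f : A →ₗ[ℝ] B) (s : Set A) :
    f '' convexHull ℝ (balancedHull ℝ s) = convexHull ℝ (balancedHull ℝ (f '' s)) := by
  rw [f.image_convexHull, image_balancedHull]

theorem KQuasiComplete.of_completeSpace {A : Type*} [AddCommGroup A] [Module ℝ A]
    [UniformSpace A] [IsUniformAddGroup A] [ContinuousSMul ℝ A] [LocallyConvexSpace ℝ A]
    [CompleteSpace A] : KQuasiComplete A := by
  intro K hK
  rw [← absConvexHull_eq_convexHull_balancedHull]
  exact (totallyBounded_absConvexHull.2 hK.totallyBounded).closure.isCompact_of_isClosed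
    isClosed_closure

section KQuasiComplete

variable {A B : Type*} [AddCommGroup A] [Module ℝ A] [TopologicalSpace A]
  [AddCommGroup B] [Module ℝ B] [TopologicalSpace B]

theorem KQuasiComplete.of_isInducing_of_surjective {f : A →ₗ[ℝ] B} (hi : IsInducing f)
    (hs : Surjective f) (h : KQuasiComplete A) : KQuasiComplete B := by
  intro K hK
  have hK' : IsCompact (f ⁻¹' K) := hi.isCompact_preimage' hK (by simp [hs.range_eq])
  have hhull : closure (convexHull ℝ (balancedHull ℝ K)) =
      f '' closure (convexHull ℝ (balancedHull ℝ (f ⁻¹' K))) := by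
    rw [hi.closure_eq_preimage_closure_image, image_preimage_eq _ hs,
      f.image_convexHull_balancedHull, image_preimage_eq _ hs]
  exact hhull ▸ (h _ hK').image hi.continuous

theorem KQuasiComplete.of_equiv (e : A ≃L[ℝ] B) (h : KQuasiComplete A) : KQuasiComplete B :=
  h.of_isInducing_of_surjective (f := (e : A →ₗ[ℝ] B)) e.toHomeomorph.isInducing e.surjective

theorem Submodule.kQuasiComplete_iff [T2Space B] {G : Submodule ℝ B} (hB : KQuasiComplete B) :
    KQuasiComplete G ↔ ∀ K : Set B, IsCompact K → K ⊆ G →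
      closure (convexHull ℝ (balancedHull ℝ K)) ⊆ G := by
  have hval : IsInducing ((↑) : G → B) := .subtypeVal
  have hhull (s : Set G) : (↑) '' convexHull ℝ (balancedHull ℝ s) =
      convexHull ℝ (balancedHull ℝ (((↑) : G → B) '' s)) :=
    G.subtype.image_convexHull_balancedHull s
  constructor
  · intro hG K hK hKG
    have hKG' : ((↑) : G → B) '' ((↑) ⁻¹' K) = K :=
      image_preimage_eq_of_subset (by rwa [Subtype.range_coe])
    have hK' : IsCompact (((↑) : G → B) ⁻¹' K) :=
      hval.isCompact_preimage' hK (by rwa [Subtype.range_coe])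
    have hC := (hG _ hK').image continuous_subtype_val
    calc closure (convexHull ℝ (balancedHull ℝ K))
        ⊆ (↑) '' closure (convexHull ℝ (balancedHull ℝ (((↑) : G → B) ⁻¹' K))) := by
          refine closure_minimal ?_ hC.isClosed
          have h := image_mono (f := ((↑) : G → B))
            (subset_closure (s := convexHull ℝ (balancedHull ℝ (((↑) : G → B) ⁻¹' K))))
          rwa [hhull, hKG'] at h
      _ ⊆ G := by rintro _ ⟨x, -, rfl⟩; exact x.2
  · intro hG K hK
    have hK' := hK.image continuous_subtype_val
    have hKG : ((↑) : G → B) '' K ⊆ G := by rintro _ ⟨x, -, rfl⟩; exact x.2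
    rw [hval.closure_eq_preimage_closure_image, hhull]
    exact hval.isCompact_preimage' (hB _ hK') (by rw [Subtype.range_coe]; exact hG _ hK' hKG)

end KQuasiComplete

namespace UniformSpace.Completion

variable (X : Type*) [AddCommGroup X] [Module ℝ X] [UniformSpace X] [IsUniformAddGroup X]
  [UniformContinuousConstSMul ℝ X]

def toComplₗ : X →ₗ[ℝ] Completion X where
  toFun := (↑)
  map_add' := coe_add
  map_smul' := coe_smul

theorem balanced_closure_image {W : Set X} (hW : Balanced ℝ W) :
    Balanced ℝ (closure (toComplₗ X '' W)) :=
  fun a ha => (smul_closure_subset a _).trans (closure_mono (hW.image _ a ha))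

variable [ContinuousSMul ℝ X] [LocallyConvexSpace ℝ X]

theorem nhds_zero_hasBasis_closure_image :
    (𝓝 (0 : Completion X)).HasBasis (fun W : Set X => W ∈ 𝓝 0 ∧ AbsConvex ℝ W)
      (fun W => closure (toComplₗ X '' W)) := by
  refine (closed_nhds_basis (0 : Completion X)).to_hasBasis (fun V ⟨hV, hVc⟩ => ?_)
    fun W ⟨hW, _⟩ => ⟨_, ⟨?_, isClosed_closure⟩, subset_rfl⟩
  · have hV' : ((↑) : X → Completion X) ⁻¹' V ∈ 𝓝 0 :=
      (continuous_coe X).continuousAt.preimage_mem_nhds (by rwa [coe_zero])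
    obtain ⟨W, hW, hWV⟩ := (nhds_hasBasis_absConvex ℝ X).mem_iff.1 hV'
    exact ⟨W, hW, closure_minimal (image_subset_iff.2 hWV) hVc⟩
  · have := (isDenseInducing_coe (α := X)).closure_image_mem_nhds hW
    rwa [coe_zero] at this

instance : ContinuousSMul ℝ (Completion X) := by
  have hb := nhds_zero_hasBasis_closure_image X
  refine .of_basis_zero hb (fun {W} hW => ⟨Metric.closedBall 0 1, Metric.closedBall_mem_nhds 0
    one_pos, W, hW, smul_subset_iff.2 fun a ha y hy => balanced_closure_image X hW.2.1 a
    (by simpa using ha) (smul_mem_smul_set hy)⟩) (fun a W hW => ?_) (fun m W hW => ?_)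
  · have : (a • ·) ⁻¹' closure (toComplₗ X '' W) ∈ 𝓝 (0 : Completion X) :=
      (continuous_const_smul a).continuousAt.preimage_mem_nhds (by
        rw [smul_zero]; exact hb.mem_of_mem hW)
    exact hb.mem_iff.1 this
  -- `a • m = a • x + a • (m - x)` with `x ∈ X` close to `m`: the first term is small by
  -- continuity in `X`, the second stays in a balanced neighbourhood for `‖a‖ ≤ 1`.
  · obtain ⟨U, hU, hUU⟩ := exists_nhds_zero_half (hb.mem_of_mem hW)
    obtain ⟨W', hW', hW'U⟩ := hb.mem_iff.1 hU
    obtain ⟨x, hx⟩ := (denseRange_coe (α := X)).mem_nhds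
      (((continuous_const.sub continuous_id).tendsto' m 0 (sub_self m)) (hb.mem_of_mem hW'))
    have hxU : ∀ᶠ a : ℝ in 𝓝 0, a • (x : Completion X) ∈ U := by
      have : Continuous fun a : ℝ => a • (x : Completion X) := by
        simp_rw [← coe_smul]
        exact (continuous_coe X).comp (continuous_id.smul continuous_const)
      exact (this.tendsto' 0 0 (zero_smul _ _)).eventually_mem hU
    filter_upwards [hxU, Metric.closedBall_mem_nhds (0 : ℝ) one_pos] with a haU ha
    have hrest : a • (m - x) ∈ U :=
      hW'U (balanced_closure_image X hW'.2.1 a (by simpa using ha) (smul_mem_smul_set hx))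
    simpa [smul_sub] using hUU _ haU _ hrest

instance : LocallyConvexSpace ℝ (Completion X) :=
  .ofBasisZero ℝ _ _ _ (nhds_zero_hasBasis_closure_image X)
    fun _ hW => (hW.2.2.linear_image _).closure

end UniformSpace.Completion

section KQuasiCompletion

variable (X : Type*) [AddCommGroup X] [Module ℝ X] [UniformSpace X] [IsUniformAddGroup X]
  [UniformContinuousConstSMul ℝ X]

theorem kQuasiComplete_kQuasiCompletion [ContinuousSMul ℝ X] [LocallyConvexSpace ℝ X] :
    KQuasiComplete (kQuasiCompletion X) := by
  have hC : KQuasiComplete (Completion X) := .of_completeSpace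
  rw [Submodule.kQuasiComplete_iff hC]
  intro K hK hKM y hy
  exact Submodule.mem_sInf.2 fun G hG => (Submodule.kQuasiComplete_iff hC).1 hG.2 K hK
    (hKM.trans (SetLike.coe_subset_coe.2 (sInf_le hG))) hy

def toKQuasiCompletionₗ : X →ₗ[ℝ] kQuasiCompletion X where
  toFun := toKQuasiCompletion X
  map_add' x y := Subtype.ext (Completion.coe_add x y)
  map_smul' c x := Subtype.ext (Completion.coe_smul c x)

theorem isEmbedding_toKQuasiCompletion [T0Space X] : IsEmbedding (toKQuasiCompletion X) :=
  (Completion.isUniformEmbedding_coe X).isEmbedding.codRestrict _ _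

def kQuasiCompletionEquivOfSurjective [T0Space X]
    (h : Surjective (toKQuasiCompletion X)) : X ≃L[ℝ] kQuasiCompletion X :=
  .ofIsHomeomorph (.ofBijective (toKQuasiCompletionₗ X)
    ⟨(isEmbedding_toKQuasiCompletion X).injective, h⟩)
    (isHomeomorph_iff_isEmbedding_surjective.2 ⟨isEmbedding_toKQuasiCompletion X, h⟩)

theorem kQuasiComplete_iff_surjective_toKQuasiCompletion [ContinuousSMul ℝ X]
    [LocallyConvexSpace ℝ X] [T0Space X] :
    KQuasiComplete X ↔ Surjective (toKQuasiCompletion X) := by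
  refine ⟨fun h => ?_, fun h =>
    (kQuasiComplete_kQuasiCompletion X).of_equiv (kQuasiCompletionEquivOfSurjective X h).symm⟩
  have hrange : KQuasiComplete (LinearMap.range (Completion.toComplₗ X)) :=
    h.of_isInducing_of_surjective ((Completion.isUniformInducing_coe X).isInducing.codRestrict _)
      (Completion.toComplₗ X).surjective_rangeRestrict
  have hle : kQuasiCompletion X ≤ LinearMap.range (Completion.toComplₗ X) :=
    sInf_le ⟨by rintro _ ⟨x, rfl⟩; exact ⟨x, rfl⟩, hrange⟩
  rintro ⟨y, hy⟩
  obtain ⟨x, rfl⟩ := hle hy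
  exact ⟨x, rfl⟩

end KQuasiCompletion

section ConvexBalancedCompact

variable {F G : Type*} [AddCommGroup F] [Module ℝ F] [TopologicalSpace F]
  [AddCommGroup G] [Module ℝ G] [TopologicalSpace G]

theorem sUnion_convex_balanced_isCompact [ContinuousSMul ℝ F] :
    ⋃₀ {K : Set F | Convex ℝ K ∧ Balanced ℝ K ∧ IsCompact K} = univ := by
  refine eq_univ_of_forall fun x => ⟨LinearMap.toSpanSingleton ℝ F x '' Metric.closedBall 0 1,
    ⟨(convex_closedBall 0 1).linear_image _, balanced_closedBall_zero.image _,
      (isCompact_closedBall 0 1).image (continuous_id.smul continuous_const)⟩,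
    1, by simp, by simp⟩

theorem directedOn_convex_balanced_isCompact [IsTopologicalAddGroup F] [ContinuousSMul ℝ F]
    (h : KQuasiComplete F) :
    DirectedOn (· ⊆ ·) {K : Set F | Convex ℝ K ∧ Balanced ℝ K ∧ IsCompact K} := by
  intro K₁ h₁ K₂ h₂
  have hsub : K₁ ∪ K₂ ⊆ closure (convexHull ℝ (balancedHull ℝ (K₁ ∪ K₂))) :=
    (subset_balancedHull ℝ).trans ((subset_convexHull ℝ _).trans subset_closure)
  exact ⟨_, ⟨(convex_convexHull ℝ _).closure, (balancedHull.balanced _).convexHull.closure,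
    h _ (h₁.2.2.union h₂.2.2)⟩, subset_union_left.trans hsub, subset_union_right.trans hsub⟩

theorem ContinuousLinearEquiv.convex_balanced_isCompact_preimage (e : F ≃L[ℝ] G) {K : Set G}
    (hK : Convex ℝ K ∧ Balanced ℝ K ∧ IsCompact K) :
    Convex ℝ (e ⁻¹' K) ∧ Balanced ℝ (e ⁻¹' K) ∧ IsCompact (e ⁻¹' K) :=
  ⟨hK.1.linear_preimage (e : F →ₗ[ℝ] G),
    hK.2.1.mulActionHom_preimage (e : F →ₗ[ℝ] G).toMulActionHom,
    e.toHomeomorph.isCompact_preimage.2 hK.2.2⟩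

end ConvexBalancedCompact

namespace ArensDual

variable {F G : Type*} [AddCommGroup F] [Module ℝ F] [TopologicalSpace F]
  [AddCommGroup G] [Module ℝ G] [TopologicalSpace G]

def congr (e : F ≃L[ℝ] G) : ArensDual F ≃L[ℝ] ArensDual G :=
  e.uniformConvergenceCLMCongr (.refl ℝ ℝ) _ _ fun _ =>
    ⟨e.convex_balanced_isCompact_preimage, fun h => by
      simpa [preimage_preimage] using e.symm.convex_balanced_isCompact_preimage h⟩

variable [IsTopologicalAddGroup F] [ContinuousSMul ℝ F]

theorem locallyConvexSpace (h : KQuasiComplete F) : LocallyConvexSpace ℝ (ArensDual F) :=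
  UniformConvergenceCLM.locallyConvexSpace ℝ _ ⟨∅, convex_empty, balanced_empty, isCompact_empty⟩
    (directedOn_convex_balanced_isCompact h)

instance : ContinuousEvalConst (ArensDual F) F ℝ :=
  UniformConvergenceCLM.continuousEvalConst _ _ _ sUnion_convex_balanced_isCompact

instance : T2Space (ArensDual F) :=
  UniformConvergenceCLM.t2Space _ _ _ sUnion_convex_balanced_isCompact

instance : ContinuousSMul ℝ (ArensDual F) :=
  UniformConvergenceCLM.continuousSMul _ _ _ fun _ hK => hK.2.2.isVonNBounded ℝ

def eval (y : F) : ArensDual F →L[ℝ] ℝ where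
  toFun f := f y
  map_add' _ _ := rfl
  map_smul' _ _ := rfl
  cont := continuous_eval_const y

end ArensDual

section KDual

variable {X : Type*} [AddCommGroup X] [Module ℝ X] [UniformSpace X] [IsUniformAddGroup X]
  [UniformContinuousConstSMul ℝ X] [ContinuousSMul ℝ X] [LocallyConvexSpace ℝ X]

instance : LocallyConvexSpace ℝ (kDual X) :=
  ArensDual.locallyConvexSpace (kQuasiComplete_kQuasiCompletion X)

variable [T0Space X]

def kDualEquivArensDual (h : KQuasiComplete X) : kDual X ≃L[ℝ] ArensDual X :=
  ArensDual.congr (kQuasiCompletionEquivOfSurjective X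
    ((kQuasiComplete_iff_surjective_toKQuasiCompletion X).1 h)).symm

theorem kQuasiComplete_kDual_of_kReflexive (hX : KQuasiComplete X)
    (h : ∃ e : X ≃L[ℝ] kDual (kDual X), ∀ (x : X) (f : kDual X),
      e x (toKQuasiCompletion _ f) = f (toKQuasiCompletion _ x)) :
    KQuasiComplete (kDual X) := by
  obtain ⟨e, he⟩ := h
  rw [kQuasiComplete_iff_surjective_toKQuasiCompletion]
  intro y
  let φ : ArensDual X := (ArensDual.eval y).comp (e : X →L[ℝ] kDual (kDual X))
  refine ⟨(kDualEquivArensDual hX).symm φ, (SeparatingDual.eq_iff_forall_dual_eq (R := ℝ)).2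
    fun (g : kDual (kDual X)) => ?_⟩
  obtain ⟨x, rfl⟩ := e.surjective g
  exact (he x _).trans (DFunLike.congr_fun ((kDualEquivArensDual hX).apply_symm_apply φ) x)

theorem exists_kDual_kDual_equiv_iff (hX : KQuasiComplete X) (hD : KQuasiComplete (kDual X)) :
    (∃ e : X ≃L[ℝ] kDual (kDual X), ∀ (x : X) (f : kDual X),
        e x (toKQuasiCompletion _ f) = f (toKQuasiCompletion _ x)) ↔
      ∃ e : X ≃L[ℝ] ArensDual (ArensDual X), ∀ (x : X) (f : ArensDual X), e x f = f x := by
  let Φ := kDualEquivArensDual hX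
  let Θ := (kDualEquivArensDual hD).trans (ArensDual.congr Φ)
  have hΘ (G : kDual (kDual X)) (f : kDual X) : Θ G (Φ f) = G (toKQuasiCompletion _ f) :=
    congrArg (fun f' => G (toKQuasiCompletion _ f')) (Φ.symm_apply_apply f)
  constructor
  · rintro ⟨e, he⟩
    exact ⟨e.trans Θ, fun x f =>
      (he x _).trans (DFunLike.congr_fun (Φ.apply_symm_apply f) x)⟩
  · rintro ⟨e, he⟩
    exact ⟨e.trans Θ.symm, fun x f => (hΘ _ f).symm.trans
      ((DFunLike.congr_fun (Θ.apply_symm_apply (e x)) (Φ f)).trans (he x (Φ f)))⟩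

end KDual

/-- A Hausdorff locally convex space `E` over `ℝ` is k-reflexive (it is
k-quasi-complete and the canonical evaluation map `E → (E'_k)'_k` is a topological
isomorphism) iff the canonical evaluation map `E → (E'_c)'_c` is a topological isomorphism
and both `E` and its Arens dual `E'_c` are k-quasi-complete. -/
theorem kReflexive_iff
    (E : Type*) [AddCommGroup E] [Module ℝ E] [UniformSpace E] [IsUniformAddGroup E]
    [ContinuousSMul ℝ E] [LocallyConvexSpace ℝ E] [T2Space E]
    [UniformContinuousConstSMul ℝ E] :
    (KQuasiComplete E ∧
      ∃ e : E ≃L[ℝ] kDual (kDual E),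
        ∀ (x : E) (f : kDual E),
          (e x) (toKQuasiCompletion _ f) = f (toKQuasiCompletion _ x)) ↔
    ((∃ e : E ≃L[ℝ] ArensDual (ArensDual E), ∀ (x : E) (f : ArensDual E), (e x) f = f x) ∧
      KQuasiComplete E ∧ KQuasiComplete (ArensDual E)) := by
  constructor
  · rintro ⟨hE, he⟩
    have hD := kQuasiComplete_kDual_of_kReflexive hE he
    exact ⟨(exists_kDual_kDual_equiv_iff hE hD).1 he, hE, hD.of_equiv (kDualEquivArensDual hE)⟩
  · rintro ⟨he, hE, hA⟩
    have hD := hA.of_equiv (kDualEquivArensDual hE).symm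
    exact ⟨hE, (exists_kDual_kDual_equiv_iff hE hD).2 he⟩
end
end
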